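/- arXiv:1710.08388 — 2 statements merged into one kernel-verified Lean document; each statement's English description precedes it below -/
import Mathlib

section
/- Fix C ∈ S₂(H₁ ⊗ H₂) and a nonzero C₁ ∈ S₂(H₁). Then over all C₂ ∈ S₂(H₂), the distance ‖C − C₁ ⊗̃ C₂‖₂ is minimized at C̃₂ = T₁(C, C₁)/‖C₁‖₂², i.e. ‖C − C₁ ⊗̃ C₂‖₂² ≥ ‖C − C₁ ⊗̃ C̃₂‖₂² for all C₂ ∈ S₂(H₂). -/
open scoped InnerProductSpace
noncomputable section

/-- Hilbert–Schmidt inner product of two operators with respect to a Hilbert basis. -/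
def hsInner {ι E : Type*} [NormedAddCommGroup E] [InnerProductSpace ℝ E]
    (b : HilbertBasis ι ℝ E) (A B : E →L[ℝ] E) : ℝ :=
  ∑' i, ⟪A (b i), B (b i)⟫_ℝ

/-- Hilbert–Schmidt norm. -/
def hsNorm {ι E : Type*} [NormedAddCommGroup E] [InnerProductSpace ℝ E]
    (b : HilbertBasis ι ℝ E) (A : E →L[ℝ] E) : ℝ :=
  Real.sqrt (hsInner b A A)

/-- Being a Hilbert–Schmidt operator. -/
def IsHS {ι E : Type*} [NormedAddCommGroup E] [InnerProductSpace ℝ E]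
    (b : HilbertBasis ι ℝ E) (A : E →L[ℝ] E) : Prop :=
  Summable fun i => ‖A (b i)‖ ^ 2

/-- A realization of the Hilbert space `H` as the Hilbert tensor product `H₁ ⊗ H₂`,
together with the operator tensor product `⊗̃`: `tmul` is bilinear with
`⟪u ⊗ v, w ⊗ z⟫ = ⟪u,w⟫⟪v,z⟫`, elementary tensors span a dense subspace, and
`otimes C₁ C₂` is the bounded operator with `(C₁ ⊗̃ C₂)(u ⊗ v) = C₁ u ⊗ C₂ v`. -/
structure HilbertTensorProduct (H₁ H₂ H : Type*) [NormedAddCommGroup H₁]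
    [InnerProductSpace ℝ H₁] [NormedAddCommGroup H₂] [InnerProductSpace ℝ H₂]
    [NormedAddCommGroup H] [InnerProductSpace ℝ H] : Type _ where
  tmul : H₁ →ₗ[ℝ] H₂ →ₗ[ℝ] H
  inner_tmul : ∀ (u w : H₁) (v z : H₂),
    ⟪tmul u v, tmul w z⟫_ℝ = ⟪u, w⟫_ℝ * ⟪v, z⟫_ℝ
  dense_span : (Submodule.span ℝ
    (Set.range fun p : H₁ × H₂ => tmul p.1 p.2)).topologicalClosure = ⊤
  otimes : (H₁ →L[ℝ] H₁) → (H₂ →L[ℝ] H₂) → (H →L[ℝ] H)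
  otimes_tmul : ∀ (C₁ : H₁ →L[ℝ] H₁) (C₂ : H₂ →L[ℝ] H₂) (u : H₁) (v : H₂),
    otimes C₁ C₂ (tmul u v) = tmul (C₁ u) (C₂ v)

variable {ι₁ ι₂ κ H₁ H₂ H : Type*}
variable [NormedAddCommGroup H₁] [InnerProductSpace ℝ H₁] [CompleteSpace H₁]
variable [NormedAddCommGroup H₂] [InnerProductSpace ℝ H₂] [CompleteSpace H₂]
variable [NormedAddCommGroup H] [InnerProductSpace ℝ H] [CompleteSpace H]

/-- `T₁` is the partial-trace type map `S₂(H₁ ⊗ H₂) × S₂(H₁) → S₂(H₂)` determined by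
`T₁(A ⊗̃ B, C₁) = ⟨A, C₁⟩ B`; it is characterized by mapping Hilbert–Schmidt operators to
Hilbert–Schmidt operators and the duality identity `⟨B, T₁(C,C₁)⟩ = ⟨C, C₁ ⊗̃ B⟩`. -/
def IsT1 {ι₁ ι₂ κ H₁ H₂ H : Type*}
    [NormedAddCommGroup H₁] [InnerProductSpace ℝ H₁]
    [NormedAddCommGroup H₂] [InnerProductSpace ℝ H₂]
    [NormedAddCommGroup H] [InnerProductSpace ℝ H]
    (P : HilbertTensorProduct H₁ H₂ H)
    (b₁ : HilbertBasis ι₁ ℝ H₁) (b₂ : HilbertBasis ι₂ ℝ H₂) (b : HilbertBasis κ ℝ H)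
    (T₁ : (H →L[ℝ] H) → (H₁ →L[ℝ] H₁) → (H₂ →L[ℝ] H₂)) : Prop :=
  (∀ C C₁, IsHS b C → IsHS b₁ C₁ → IsHS b₂ (T₁ C C₁)) ∧
  (∀ C C₁ B, IsHS b C → IsHS b₁ C₁ → IsHS b₂ B →
      hsInner b₂ B (T₁ C C₁) = hsInner b C (P.otimes C₁ B))

/-- `T₂` is the map `S₂(H₁ ⊗ H₂) × S₂(H₂) → S₂(H₁)` determined by
`T₂(A ⊗̃ B, C₂) = ⟨B, C₂⟩ A`; characterized by `⟨A, T₂(C,C₂)⟩ = ⟨C, A ⊗̃ C₂⟩`. -/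
def IsT2 {ι₁ ι₂ κ H₁ H₂ H : Type*}
    [NormedAddCommGroup H₁] [InnerProductSpace ℝ H₁]
    [NormedAddCommGroup H₂] [InnerProductSpace ℝ H₂]
    [NormedAddCommGroup H] [InnerProductSpace ℝ H]
    (P : HilbertTensorProduct H₁ H₂ H)
    (b₁ : HilbertBasis ι₁ ℝ H₁) (b₂ : HilbertBasis ι₂ ℝ H₂) (b : HilbertBasis κ ℝ H)
    (T₂ : (H →L[ℝ] H) → (H₂ →L[ℝ] H₂) → (H₁ →L[ℝ] H₁)) : Prop :=
  (∀ C C₂, IsHS b C → IsHS b₂ C₂ → IsHS b₁ (T₂ C C₂)) ∧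
  (∀ C C₂ A, IsHS b C → IsHS b₂ C₂ → IsHS b₁ A →
      hsInner b₁ A (T₂ C C₂) = hsInner b C (P.otimes A C₂))

/-!
Expanding the square gives
`‖C − C₁ ⊗̃ B‖₂² = ‖C‖₂² − 2 ⟨B, T₁(C, C₁)⟩ + ‖C₁‖₂² ‖B‖₂²`,
using the duality that characterizes `T₁` and `‖C₁ ⊗̃ B‖₂ = ‖C₁‖₂ ‖B‖₂`. The latter is computed
in the Hilbert basis `(b₁ i ⊗ b₂ j)`, which is allowed because the Hilbert–Schmidt norm does not
depend on the basis: in any two bases `e`, `f` one has `‖A‖_e = ‖A*‖_f`. The right-hand side is a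
quadratic in `B` with leading coefficient `‖C₁‖₂² > 0`, and completing the square shows that it is
minimized at `B = T₁(C, C₁) / ‖C₁‖₂²`.
-/

open scoped ENNReal

section HilbertSchmidt

variable {ι E F : Type*} [NormedAddCommGroup E] [InnerProductSpace ℝ E]

lemma HilbertBasis.apply_mem_of_forall [NormedAddCommGroup F] [NormedSpace ℝ F]
    (b : HilbertBasis ι ℝ E) (f : E →L[ℝ] F) {M : Submodule ℝ F} (hM : IsClosed (M : Set F))
    (h : ∀ i, f (b i) ∈ M) (x : E) : f x ∈ M := by
  have hspan : Submodule.span ℝ (Set.range b) ≤ M.comap (f : E →ₗ[ℝ] F) :=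
    Submodule.span_le.2 (Set.range_subset_iff.2 h)
  have hclosure := Submodule.topologicalClosure_minimal _ hspan (hM.preimage f.continuous)
  rw [b.dense_span] at hclosure
  exact hclosure Submodule.mem_top

lemma hsInner_comm (b : HilbertBasis ι ℝ E) (A B : E →L[ℝ] E) :
    hsInner b A B = hsInner b B A :=
  tsum_congr fun _ => real_inner_comm _ _

lemma hsInner_self_eq_tsum (b : HilbertBasis ι ℝ E) (A : E →L[ℝ] E) :
    hsInner b A A = ∑' i, ‖A (b i)‖ ^ 2 :=
  tsum_congr fun _ => real_inner_self_eq_norm_sq _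

lemma hsInner_self_nonneg (b : HilbertBasis ι ℝ E) (A : E →L[ℝ] E) : 0 ≤ hsInner b A A :=
  tsum_nonneg fun _ => real_inner_self_nonneg

lemma hsNorm_sq (b : HilbertBasis ι ℝ E) (A : E →L[ℝ] E) :
    hsNorm b A ^ 2 = hsInner b A A :=
  Real.sq_sqrt (hsInner_self_nonneg b A)

lemma hsInner_self_pos {b : HilbertBasis ι ℝ E} {A : E →L[ℝ] E}
    (hA : IsHS b A) (hA₀ : A ≠ 0) : 0 < hsInner b A A := by
  refine (hsInner_self_nonneg b A).lt_of_ne fun h => hA₀ ?_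
  have hzero : ∀ i, A (b i) = 0 := fun i => by
    have hle : ‖A (b i)‖ ^ 2 ≤ hsInner b A A := by
      rw [hsInner_self_eq_tsum]
      exact hA.le_tsum i fun j _ => sq_nonneg _
    rw [← h] at hle
    exact norm_eq_zero.1 (pow_eq_zero_iff two_ne_zero |>.1 (hle.antisymm (sq_nonneg _)))
  ext x
  exact b.apply_mem_of_forall A (M := ⊥) isClosed_singleton hzero x

lemma IsHS.summable_inner {b : HilbertBasis ι ℝ E} {A B : E →L[ℝ] E}
    (hA : IsHS b A) (hB : IsHS b B) : Summable fun i => ⟪A (b i), B (b i)⟫_ℝ := by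
  refine Summable.of_norm_bounded ((hA.add hB).div_const 2) fun i => ?_
  calc ‖⟪A (b i), B (b i)⟫_ℝ‖ ≤ ‖A (b i)‖ * ‖B (b i)‖ := norm_inner_le_norm _ _
    _ ≤ (‖A (b i)‖ ^ 2 + ‖B (b i)‖ ^ 2) / 2 := by
      nlinarith [sq_nonneg (‖A (b i)‖ - ‖B (b i)‖)]

lemma IsHS.smul {b : HilbertBasis ι ℝ E} {A : E →L[ℝ] E} (hA : IsHS b A) (c : ℝ) :
    IsHS b (c • A) := by
  simpa only [IsHS, smul_apply, norm_smul, mul_pow] using hA.mul_left (‖c‖ ^ 2)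

lemma hsInner_smul_left (b : HilbertBasis ι ℝ E) (A B : E →L[ℝ] E) (c : ℝ) :
    hsInner b (c • A) B = c * hsInner b A B := by
  simp only [hsInner, smul_apply, real_inner_smul_left, tsum_mul_left]

lemma hsInner_smul_right (b : HilbertBasis ι ℝ E) (A B : E →L[ℝ] E) (c : ℝ) :
    hsInner b A (c • B) = c * hsInner b A B := by
  rw [hsInner_comm, hsInner_smul_left, hsInner_comm]

lemma hsInner_sub_sub_self {b : HilbertBasis ι ℝ E} {A B : E →L[ℝ] E}
    (hA : IsHS b A) (hB : IsHS b B) :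
    hsInner b (A - B) (A - B) = hsInner b A A - 2 * hsInner b A B + hsInner b B B := by
  have hAB := (hA.summable_inner hB).mul_left 2
  simp only [hsInner, sub_apply, real_inner_sub_sub_self]
  rw [((hA.summable_inner hA).sub hAB).tsum_add (hB.summable_inner hB),
    (hA.summable_inner hA).tsum_sub hAB, tsum_mul_left]

lemma two_mul_hsInner_sub_le {b : HilbertBasis ι ℝ E} {A B : E →L[ℝ] E} {t : ℝ} (ht : 0 < t)
    (hA : IsHS b A) (hB : IsHS b B) :
    2 * hsInner b A B - t * hsInner b A A ≤ t⁻¹ * hsInner b B B := by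
  have hsq := hsInner_self_nonneg b (t • A - B)
  rw [hsInner_sub_sub_self (hA.smul t) hB, hsInner_smul_left, hsInner_smul_left,
    hsInner_smul_right] at hsq
  rw [inv_mul_eq_div, le_div_iff₀ ht]
  nlinarith

end HilbertSchmidt

section BasisIndependence

variable {ι ι' E : Type*} [NormedAddCommGroup E] [InnerProductSpace ℝ E]

/-- Square of the Hilbert–Schmidt norm, valued in `ℝ≥0∞` so that double sums can be exchanged
without any summability bookkeeping. -/
def hsENormSq (b : HilbertBasis ι ℝ E) (A : E →L[ℝ] E) : ℝ≥0∞ :=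
  ∑' i, ENNReal.ofReal (‖A (b i)‖ ^ 2)

lemma isHS_iff_hsENormSq_ne_top (b : HilbertBasis ι ℝ E) (A : E →L[ℝ] E) :
    IsHS b A ↔ hsENormSq b A ≠ ⊤ := by
  simp only [hsENormSq, ENNReal.ofReal, ENNReal.tsum_coe_ne_top_iff_summable,
    ← NNReal.summable_coe, Real.coe_toNNReal _ (sq_nonneg _)]
  rfl

lemma hsInner_self_eq_toReal_hsENormSq (b : HilbertBasis ι ℝ E) (A : E →L[ℝ] E) :
    hsInner b A A = (hsENormSq b A).toReal := by
  rw [hsInner_self_eq_tsum, hsENormSq, ENNReal.tsum_toReal_eq fun _ => ENNReal.ofReal_ne_top]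
  exact tsum_congr fun i => (ENNReal.toReal_ofReal (sq_nonneg _)).symm

lemma HilbertBasis.tsum_ofReal_inner_sq (b : HilbertBasis ι ℝ E) (x : E) :
    ∑' i, ENNReal.ofReal (⟪x, b i⟫_ℝ * ⟪b i, x⟫_ℝ) = ENNReal.ofReal (‖x‖ ^ 2) := by
  rw [← ENNReal.ofReal_tsum_of_nonneg
      (fun i => by rw [real_inner_comm (b i) x]; exact mul_self_nonneg _)
      (b.summable_inner_mul_inner x x),
    b.tsum_inner_mul_inner, real_inner_self_eq_norm_sq]

variable [CompleteSpace E]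

lemma hsENormSq_eq_adjoint (b : HilbertBasis ι ℝ E) (e : HilbertBasis ι' ℝ E) (A : E →L[ℝ] E) :
    hsENormSq b A = hsENormSq e (ContinuousLinearMap.adjoint A) := by
  unfold hsENormSq
  calc ∑' i, ENNReal.ofReal (‖A (b i)‖ ^ 2)
      = ∑' i, ∑' j, ENNReal.ofReal (⟪A (b i), e j⟫_ℝ * ⟪e j, A (b i)⟫_ℝ) :=
        tsum_congr fun i => (e.tsum_ofReal_inner_sq _).symm
    _ = ∑' j, ∑' i, ENNReal.ofReal (⟪A (b i), e j⟫_ℝ * ⟪e j, A (b i)⟫_ℝ) := ENNReal.tsum_comm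
    _ = ∑' j, ENNReal.ofReal (‖ContinuousLinearMap.adjoint A (e j)‖ ^ 2) := by
        refine tsum_congr fun j => ?_
        rw [← b.tsum_ofReal_inner_sq]
        refine tsum_congr fun i => ?_
        rw [ContinuousLinearMap.adjoint_inner_left, ContinuousLinearMap.adjoint_inner_right,
          mul_comm]

lemma hsENormSq_basis_indep (b : HilbertBasis ι ℝ E) (e : HilbertBasis ι' ℝ E) (A : E →L[ℝ] E) :
    hsENormSq b A = hsENormSq e A := by
  rw [hsENormSq_eq_adjoint b e, hsENormSq_eq_adjoint e e, ContinuousLinearMap.adjoint_adjoint]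

end BasisIndependence

namespace HilbertTensorProduct

variable {ι₁ ι₂ κ E₁ E₂ E : Type*}
  [NormedAddCommGroup E₁] [InnerProductSpace ℝ E₁] [NormedAddCommGroup E₂] [InnerProductSpace ℝ E₂]
  [NormedAddCommGroup E] [InnerProductSpace ℝ E]
  (P : HilbertTensorProduct E₁ E₂ E) (b₁ : HilbertBasis ι₁ ℝ E₁) (b₂ : HilbertBasis ι₂ ℝ E₂)

lemma norm_tmul (u : E₁) (v : E₂) : ‖P.tmul u v‖ = ‖u‖ * ‖v‖ := by
  have h := P.inner_tmul u u v v
  simp only [real_inner_self_eq_norm_sq, ← mul_pow] at h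
  exact (pow_left_inj₀ (norm_nonneg _) (by positivity) two_ne_zero).1 h

def tmulL : E₁ →L[ℝ] E₂ →L[ℝ] E :=
  P.tmul.mkContinuous₂ 1 fun u v => by rw [P.norm_tmul, one_mul]

lemma orthonormal_tmul_basis : Orthonormal ℝ fun p : ι₁ × ι₂ => P.tmul (b₁ p.1) (b₂ p.2) := by
  classical
  rw [orthonormal_iff_ite]
  rintro ⟨i, j⟩ ⟨i', j'⟩
  rw [P.inner_tmul, orthonormal_iff_ite.1 b₁.orthonormal, orthonormal_iff_ite.1 b₂.orthonormal]
  by_cases hi : i = i' <;> by_cases hj : j = j' <;> simp [hi, hj]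

lemma dense_span_tmul_basis :
    ⊤ ≤ (Submodule.span ℝ
      (Set.range fun p : ι₁ × ι₂ => P.tmul (b₁ p.1) (b₂ p.2))).topologicalClosure := by
  set M := (Submodule.span ℝ
    (Set.range fun p : ι₁ × ι₂ => P.tmul (b₁ p.1) (b₂ p.2))).topologicalClosure
  have hM : IsClosed (M : Set E) := Submodule.isClosed_topologicalClosure _
  have hbasis_tmul : ∀ i v, P.tmul (b₁ i) v ∈ M := fun i =>
    b₂.apply_mem_of_forall (P.tmulL (b₁ i)) hM fun j =>
      Submodule.le_topologicalClosure _ (Submodule.subset_span ⟨(i, j), rfl⟩)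
  have htmul : ∀ u v, P.tmul u v ∈ M := fun u v =>
    b₁.apply_mem_of_forall (P.tmulL.flip v) hM (fun i => hbasis_tmul i v) u
  rw [← P.dense_span]
  refine Submodule.topologicalClosure_minimal _ (Submodule.span_le.2 ?_) hM
  rintro _ ⟨⟨u, v⟩, rfl⟩
  exact htmul u v

variable [CompleteSpace E]

def hilbertBasis : HilbertBasis (ι₁ × ι₂) ℝ E :=
  HilbertBasis.mk (P.orthonormal_tmul_basis b₁ b₂) (P.dense_span_tmul_basis b₁ b₂)

lemma hilbertBasis_apply (p : ι₁ × ι₂) : P.hilbertBasis b₁ b₂ p = P.tmul (b₁ p.1) (b₂ p.2) := by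
  rw [hilbertBasis, HilbertBasis.coe_mk]

lemma hsENormSq_otimes (C₁ : E₁ →L[ℝ] E₁) (C₂ : E₂ →L[ℝ] E₂) :
    hsENormSq (P.hilbertBasis b₁ b₂) (P.otimes C₁ C₂) = hsENormSq b₁ C₁ * hsENormSq b₂ C₂ := by
  simp only [hsENormSq, hilbertBasis_apply, otimes_tmul, norm_tmul, mul_pow,
    ENNReal.ofReal_mul (sq_nonneg _), ENNReal.tsum_prod', ENNReal.tsum_mul_left,
    ENNReal.tsum_mul_right]

variable {b : HilbertBasis κ ℝ E}

lemma isHS_otimes {C₁ : E₁ →L[ℝ] E₁} {C₂ : E₂ →L[ℝ] E₂} (h₁ : IsHS b₁ C₁) (h₂ : IsHS b₂ C₂) :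
    IsHS b (P.otimes C₁ C₂) := by
  rw [isHS_iff_hsENormSq_ne_top, hsENormSq_basis_indep b (P.hilbertBasis b₁ b₂),
    hsENormSq_otimes]
  exact ENNReal.mul_ne_top ((isHS_iff_hsENormSq_ne_top _ _).1 h₁)
    ((isHS_iff_hsENormSq_ne_top _ _).1 h₂)

lemma hsNorm_otimes (C₁ : E₁ →L[ℝ] E₁) (C₂ : E₂ →L[ℝ] E₂) :
    hsNorm b (P.otimes C₁ C₂) = hsNorm b₁ C₁ * hsNorm b₂ C₂ := by
  simp only [hsNorm, hsInner_self_eq_toReal_hsENormSq]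
  rw [hsENormSq_basis_indep b (P.hilbertBasis b₁ b₂), hsENormSq_otimes, ENNReal.toReal_mul,
    Real.sqrt_mul ENNReal.toReal_nonneg]

end HilbertTensorProduct

lemma IsT1.hsNorm_sub_otimes_sq {ι₁ ι₂ κ E₁ E₂ E : Type*}
    [NormedAddCommGroup E₁] [InnerProductSpace ℝ E₁] [NormedAddCommGroup E₂]
    [InnerProductSpace ℝ E₂] [NormedAddCommGroup E] [InnerProductSpace ℝ E] [CompleteSpace E]
    {P : HilbertTensorProduct E₁ E₂ E} {b₁ : HilbertBasis ι₁ ℝ E₁}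
    {b₂ : HilbertBasis ι₂ ℝ E₂} {b : HilbertBasis κ ℝ E}
    {T₁ : (E →L[ℝ] E) → (E₁ →L[ℝ] E₁) → (E₂ →L[ℝ] E₂)} (hT₁ : IsT1 P b₁ b₂ b T₁)
    {C : E →L[ℝ] E} {C₁ : E₁ →L[ℝ] E₁} {B : E₂ →L[ℝ] E₂}
    (hC : IsHS b C) (hC₁ : IsHS b₁ C₁) (hB : IsHS b₂ B) :
    hsNorm b (C - P.otimes C₁ B) ^ 2 =
      hsNorm b C ^ 2 - 2 * hsInner b₂ B (T₁ C C₁) + hsNorm b₁ C₁ ^ 2 * hsNorm b₂ B ^ 2 := by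
  rw [hsNorm_sq, hsInner_sub_sub_self hC (P.isHS_otimes b₁ b₂ hC₁ hB), ← hsNorm_sq b C,
    ← hsNorm_sq b (P.otimes C₁ B), P.hsNorm_otimes, mul_pow, hT₁.2 C C₁ B hC hC₁ hB]

/-- for fixed `C ∈ S₂(H₁ ⊗ H₂)` and nonzero `C₁ ∈ S₂(H₁)`, over all
`C₂ ∈ S₂(H₂)` the distance `‖C − C₁ ⊗̃ C₂‖₂` is minimized at `C̃₂ = T₁(C, C₁)/‖C₁‖₂²`. -/
theorem stmt7 (P : HilbertTensorProduct H₁ H₂ H)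
    (b₁ : HilbertBasis ι₁ ℝ H₁) (b₂ : HilbertBasis ι₂ ℝ H₂) (b : HilbertBasis κ ℝ H)
    (T₁ : (H →L[ℝ] H) → (H₁ →L[ℝ] H₁) → (H₂ →L[ℝ] H₂))
    (hT₁ : IsT1 P b₁ b₂ b T₁)
    (C : H →L[ℝ] H) (C₁ : H₁ →L[ℝ] H₁) (hC : IsHS b C) (hC₁ : IsHS b₁ C₁)
    (hC₁ne : C₁ ≠ 0) :
    ∀ C₂ : H₂ →L[ℝ] H₂, IsHS b₂ C₂ →
      hsNorm b (C - P.otimes C₁ C₂) ^ 2 ≥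
        hsNorm b (C - P.otimes C₁ ((hsNorm b₁ C₁ ^ 2)⁻¹ • T₁ C C₁)) ^ 2 := by
  intro C₂ hC₂
  have hT : IsHS b₂ (T₁ C C₁) := hT₁.1 C C₁ hC hC₁
  have ht : 0 < hsNorm b₁ C₁ ^ 2 := hsNorm_sq b₁ C₁ ▸ hsInner_self_pos hC₁ hC₁ne
  have hquad := two_mul_hsInner_sub_le ht hC₂ hT
  rw [ge_iff_le, hT₁.hsNorm_sub_otimes_sq hC hC₁ hC₂, hT₁.hsNorm_sub_otimes_sq hC hC₁ (hT.smul _),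
    hsNorm_sq b₂ C₂, hsNorm_sq b₂ (_ • _), hsInner_smul_left, hsInner_smul_left,
    hsInner_smul_right]
  generalize hsNorm b₁ C₁ ^ 2 = t at ht hquad ⊢
  rw [mul_inv_cancel_left₀ ht.ne']
  linarith
end
end

section
/- Let S and T be compact subsets of ℝ^p and ℝ^q, and let C ∈ S₂(L²(S × T)) be an integral operator with symmetric continuous kernel c. Then for every ε > 0 there exists an operator C′ = Σ_{n=1}^N A_n ⊗̃ B_n, where A_n and B_n are finite-rank integral operators on L²(S) and L²(T) with continuous kernels, such that ‖C − C′‖₂ ≤ ε and sup_{s,s′,t,t′} |c(s,t,s′,t′) − c′(s,t,s′,t′)| ≤ ε, where c′ is the kernel of C′. -/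
/-!
By Stone–Weierstrass, `c` is uniformly within `ε'` on `(S × T)²` of a finite sum
`∑ₙ uₙ(s) vₙ(s') wₙ(t) zₙ(t')` of products of continuous functions. With the rank-one operators
`Aₙ = rankOne uₙ vₙ` and `Bₙ = rankOne wₙ zₙ`, the operator `Aₙ ⊗̃ Bₙ` is
`rankOne (uₙ ⊗ wₙ) (vₙ ⊗ zₙ)`, whose kernel is exactly that summand. An integral operator whose
kernel is bounded by `δ` on a space of finite measure `m` has Hilbert–Schmidt norm at most `δ m`
(Bessel's inequality, row by row), so `ε' = ε / (1 + m)` yields both estimates.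
-/

open scoped InnerProductSpace
noncomputable section

variable {ι₁ ι₂ κ H₁ H₂ H : Type*}
variable [NormedAddCommGroup H₁] [InnerProductSpace ℝ H₁] [CompleteSpace H₁]
variable [NormedAddCommGroup H₂] [InnerProductSpace ℝ H₂] [CompleteSpace H₂]
variable [NormedAddCommGroup H] [InnerProductSpace ℝ H] [CompleteSpace H]

open MeasureTheory

/-- The Lebesgue measure restricted to a subset of `ℝ^n`. -/
def restVol {n : ℕ} (S : Set (EuclideanSpace ℝ (Fin n))) :
    Measure (EuclideanSpace ℝ (Fin n)) :=
  (volume : Measure (EuclideanSpace ℝ (Fin n))).restrict S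

open InnerProductSpace

section Kernel

variable {α : Type*} [MeasurableSpace α] {ρ : Measure α}

def HasKernel (D : Lp ℝ 2 ρ →L[ℝ] Lp ℝ 2 ρ) (k : α → α → ℝ) : Prop :=
  ∀ f : Lp ℝ 2 ρ, D f =ᵐ[ρ] fun x => ∫ y, k x y * f y ∂ρ

lemma MeasureTheory.MemLp.integrable_mul_coeFn {g : α → ℝ} (hg : MemLp g 2 ρ) (f : Lp ℝ 2 ρ) :
    Integrable (fun y => g y * f y) ρ :=
  hg.integrable_mul (Lp.memLp f)

lemma HasKernel.sub {D₁ D₂ : Lp ℝ 2 ρ →L[ℝ] Lp ℝ 2 ρ} {k₁ k₂ : α → α → ℝ}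
    (h₁ : HasKernel D₁ k₁) (h₂ : HasKernel D₂ k₂)
    (hk₁ : ∀ᵐ x ∂ρ, MemLp (k₁ x) 2 ρ) (hk₂ : ∀ᵐ x ∂ρ, MemLp (k₂ x) 2 ρ) :
    HasKernel (D₁ - D₂) fun x y => k₁ x y - k₂ x y := by
  intro f
  filter_upwards [Lp.coeFn_sub (D₁ f) (D₂ f), h₁ f, h₂ f, hk₁, hk₂] with x hsub e₁ e₂ m₁ m₂
  rw [sub_apply, hsub, Pi.sub_apply, e₁, e₂,
    ← integral_sub (m₁.integrable_mul_coeFn f) (m₂.integrable_mul_coeFn f)]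
  simp only [sub_mul]

lemma HasKernel.sum {ι : Type*} [Fintype ι] {D : ι → Lp ℝ 2 ρ →L[ℝ] Lp ℝ 2 ρ}
    {k : ι → α → α → ℝ} (hD : ∀ i, HasKernel (D i) (k i)) (hk : ∀ i, ∀ᵐ x ∂ρ, MemLp (k i x) 2 ρ) :
    HasKernel (∑ i, D i) fun x y => ∑ i, k i x y := by
  intro f
  filter_upwards [Lp.coeFn_fun_finsetSum Finset.univ fun i => D i f,
    Filter.eventually_all.2 fun i => hD i f, Filter.eventually_all.2 hk] with x hsum e m
  simp only [sum_apply, hsum, e, Finset.sum_mul]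
  exact (integral_finsetSum _ fun i _ => (m i).integrable_mul_coeFn f).symm

lemma hasKernel_rankOne {U V : Lp ℝ 2 ρ} {u v : α → ℝ} (hU : U =ᵐ[ρ] u) (hV : V =ᵐ[ρ] v) :
    HasKernel (rankOne ℝ U V) fun x y => u x * v y := by
  intro f
  have hVf : ⟪V, f⟫_ℝ = ∫ y, v y * f y ∂ρ := by
    rw [L2.inner_def]
    refine integral_congr_ae ?_
    filter_upwards [hV] with y hy
    simp [hy, mul_comm]
  filter_upwards [Lp.coeFn_smul ⟪V, f⟫_ℝ U, hU] with x hsmul hx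
  rw [rankOne_apply, hsmul, Pi.smul_apply, hx, hVf, smul_eq_mul, mul_comm, ← integral_const_mul]
  simp only [mul_assoc]

lemma real_inner_self_eq_integral_sq (f : Lp ℝ 2 ρ) : ⟪f, f⟫_ℝ = ∫ x, f x ^ 2 ∂ρ := by
  rw [L2.inner_def]
  simp [sq]

lemma sum_sq_integral_mul_le {ι : Type*} {e : ι → Lp ℝ 2 ρ} (he : Orthonormal ℝ e)
    {g : α → ℝ} (hg : MemLp g 2 ρ) (s : Finset ι) :
    ∑ i ∈ s, (∫ y, g y * e i y ∂ρ) ^ 2 ≤ ∫ y, g y ^ 2 ∂ρ := by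
  have hcoeff : ∀ i, ∫ y, g y * e i y ∂ρ = ⟪e i, hg.toLp g⟫_ℝ := by
    intro i
    rw [real_inner_comm, L2.inner_def]
    refine integral_congr_ae ?_
    filter_upwards [hg.coeFn_toLp] with y hy
    simp [hy, mul_comm]
  have hnorm : ∫ y, g y ^ 2 ∂ρ = ‖hg.toLp g‖ ^ 2 := by
    rw [← real_inner_self_eq_norm_sq, real_inner_self_eq_integral_sq]
    refine integral_congr_ae ?_
    filter_upwards [hg.coeFn_toLp] with y hy
    simp [hy]
  simpa [hcoeff, hnorm] using he.sum_inner_products_le (hg.toLp g) (s := s)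

theorem hsNorm_le_of_hasKernel [IsFiniteMeasure ρ] {ι : Type*} (b : HilbertBasis ι ℝ (Lp ℝ 2 ρ))
    {D : Lp ℝ 2 ρ →L[ℝ] Lp ℝ 2 ρ} {k : α → α → ℝ} (hD : HasKernel D k)
    (hk : ∀ᵐ x ∂ρ, MemLp (k x) 2 ρ) {δ : ℝ} (hδ : 0 ≤ δ)
    (hbound : ∀ᵐ x ∂ρ, ∀ᵐ y ∂ρ, |k x y| ≤ δ) :
    hsNorm b D ≤ δ * ρ.real Set.univ := by
  have hrow : ∀ᵐ x ∂ρ, ∫ y, k x y ^ 2 ∂ρ ≤ δ ^ 2 * ρ.real Set.univ := by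
    filter_upwards [hbound] with x hx
    calc ∫ y, k x y ^ 2 ∂ρ ≤ ∫ _, δ ^ 2 ∂ρ :=
          integral_mono_of_nonneg (.of_forall fun y => sq_nonneg _) (integrable_const _)
            (hx.mono fun y hy => sq_le_sq' (abs_le.mp hy).1 (abs_le.mp hy).2)
      _ = δ ^ 2 * ρ.real Set.univ := by rw [integral_const, smul_eq_mul, mul_comm]
  -- Bessel's inequality for each row `k x` bounds `∑ᵢ (D bᵢ x)² = ∑ᵢ ⟪k x, bᵢ⟫²`.
  have hpartial : ∀ s : Finset ι, ∑ i ∈ s, ⟪D (b i), D (b i)⟫_ℝ ≤ (δ * ρ.real Set.univ) ^ 2 := by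
    intro s
    calc ∑ i ∈ s, ⟪D (b i), D (b i)⟫_ℝ = ∫ x, ∑ i ∈ s, D (b i) x ^ 2 ∂ρ := by
          rw [integral_finsetSum _ fun i _ => (Lp.memLp _).integrable_sq]
          simp only [real_inner_self_eq_integral_sq]
      _ ≤ ∫ _, δ ^ 2 * ρ.real Set.univ ∂ρ := by
          refine integral_mono_of_nonneg (.of_forall fun x => by positivity) (integrable_const _) ?_
          filter_upwards [(Filter.eventually_all_finset s).2 fun i _ => hD (b i), hk, hrow]
            with x e hx hrowx
          rw [Finset.sum_congr rfl fun i hi => by rw [e i hi]]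
          exact (sum_sq_integral_mul_le b.orthonormal hx s).trans hrowx
      _ = (δ * ρ.real Set.univ) ^ 2 := by rw [integral_const, smul_eq_mul]; ring
  calc hsNorm b D ≤ √((δ * ρ.real Set.univ) ^ 2) :=
        Real.sqrt_le_sqrt (tsum_le_of_sum_le' (sq_nonneg _) hpartial)
    _ = δ * ρ.real Set.univ := Real.sqrt_sq (by positivity)

lemma memLp_of_continuous_of_ae_mem [TopologicalSpace α] [OpensMeasurableSpace α]
    [IsFiniteMeasure ρ] {K : Set α} (hK : IsCompact K) (hρK : ∀ᵐ x ∂ρ, x ∈ K) {f : α → ℝ}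
    (hf : Continuous f) (p : ENNReal) : MemLp f p ρ := by
  obtain ⟨M, hM⟩ := hK.exists_bound_of_continuousOn hf.continuousOn
  exact .of_bound hf.aestronglyMeasurable M (hρK.mono hM)

theorem hsNorm_sub_le_of_continuous_kernels [TopologicalSpace α] [OpensMeasurableSpace α]
    [IsFiniteMeasure ρ] {K : Set α} (hK : IsCompact K) (hρK : ∀ᵐ x ∂ρ, x ∈ K) {ι : Type*}
    (b : HilbertBasis ι ℝ (Lp ℝ 2 ρ)) {D₁ D₂ : Lp ℝ 2 ρ →L[ℝ] Lp ℝ 2 ρ} {k₁ k₂ : α → α → ℝ}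
    (h₁ : HasKernel D₁ k₁) (h₂ : HasKernel D₂ k₂)
    (hk₁ : Continuous fun x : α × α => k₁ x.1 x.2) (hk₂ : Continuous fun x : α × α => k₂ x.1 x.2)
    {δ : ℝ} (hδ : 0 ≤ δ) (hbound : ∀ x ∈ K, ∀ y ∈ K, |k₁ x y - k₂ x y| ≤ δ) :
    hsNorm b (D₁ - D₂) ≤ δ * ρ.real Set.univ := by
  have hrow {k : α → α → ℝ} (hk : Continuous fun x : α × α => k x.1 x.2) :
      ∀ᵐ x ∂ρ, MemLp (k x) 2 ρ :=
    .of_forall fun x => memLp_of_continuous_of_ae_mem hK hρK (by fun_prop) 2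
  refine hsNorm_le_of_hasKernel b (h₁.sub h₂ (hrow hk₁) (hrow hk₂)) (hrow (by fun_prop)) hδ ?_
  filter_upwards [hρK] with x hx
  filter_upwards [hρK] with y hy
  exact hbound x hx y hy

end Kernel

section TensorProduct

lemma HilbertTensorProduct.otimes_rankOne {E₁ E₂ E : Type*} [NormedAddCommGroup E₁]
    [InnerProductSpace ℝ E₁] [NormedAddCommGroup E₂] [InnerProductSpace ℝ E₂]
    [NormedAddCommGroup E] [InnerProductSpace ℝ E] (P : HilbertTensorProduct E₁ E₂ E)
    (u v : E₁) (w z : E₂) :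
    P.otimes (rankOne ℝ u v) (rankOne ℝ w z) = rankOne ℝ (P.tmul u w) (P.tmul v z) := by
  refine ContinuousLinearMap.ext_on
    (Submodule.dense_iff_topologicalClosure_eq_top.mpr P.dense_span) ?_
  rintro _ ⟨⟨f, g⟩, rfl⟩
  simp [P.otimes_tmul, P.inner_tmul, smul_smul, mul_comm]

variable {α β : Type*} [MeasurableSpace α] [MeasurableSpace β] {μ : Measure α} {ν : Measure β}
  {P : HilbertTensorProduct (Lp ℝ 2 μ) (Lp ℝ 2 ν) (Lp ℝ 2 (μ.prod ν))}

lemma HilbertTensorProduct.tmul_ae_eq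
    (hP : ∀ (f : Lp ℝ 2 μ) (g : Lp ℝ 2 ν), P.tmul f g =ᵐ[μ.prod ν] fun x => f x.1 * g x.2)
    {f : Lp ℝ 2 μ} {g : Lp ℝ 2 ν} {u : α → ℝ} {w : β → ℝ}
    (hf : f =ᵐ[μ] u) (hg : g =ᵐ[ν] w) :
    P.tmul f g =ᵐ[μ.prod ν] fun x => u x.1 * w x.2 := by
  filter_upwards [hP f g, Measure.quasiMeasurePreserving_fst.ae hf,
    Measure.quasiMeasurePreserving_snd.ae hg] with x hx hx₁ hx₂
  rw [hx, hx₁, hx₂]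

lemma hasKernel_otimes_rankOne
    (hP : ∀ (f : Lp ℝ 2 μ) (g : Lp ℝ 2 ν), P.tmul f g =ᵐ[μ.prod ν] fun x => f x.1 * g x.2)
    {U V : Lp ℝ 2 μ} {W Z : Lp ℝ 2 ν} {u v : α → ℝ} {w z : β → ℝ}
    (hU : U =ᵐ[μ] u) (hV : V =ᵐ[μ] v) (hW : W =ᵐ[ν] w) (hZ : Z =ᵐ[ν] z) :
    HasKernel (P.otimes (rankOne ℝ U V) (rankOne ℝ W Z))
      fun x y => u x.1 * v y.1 * (w x.2 * z y.2) := by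
  rw [P.otimes_rankOne]
  convert hasKernel_rankOne (P.tmul_ae_eq hP hU hW) (P.tmul_ae_eq hP hV hZ) using 3
  ring

end TensorProduct

section StoneWeierstrass

variable {E F : Type*} [MetricSpace E] [MetricSpace F]

/-- `(u, v, w, z) ↦ ((s, t), (s', t')) ↦ u s * v s' * (w t * z t')` on `K`. -/
def kernelProd (K : Set ((E × F) × (E × F))) :
    (C(E, ℝ) × C(E, ℝ)) × (C(F, ℝ) × C(F, ℝ)) →* C(K, ℝ) where
  toFun f := ⟨fun x => f.1.1 x.1.1.1 * f.1.2 x.1.2.1 * (f.2.1 x.1.1.2 * f.2.2 x.1.2.2),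
    by fun_prop⟩
  map_one' := by ext; simp
  map_mul' f g := by ext; simp; ring

lemma separatesPoints_adjoin_kernelProd (K : Set ((E × F) × (E × F))) :
    (Algebra.adjoin ℝ (MonoidHom.mrange (kernelProd K) : Set C(K, ℝ))).SeparatesPoints := by
  intro x y hxy
  by_contra! hsame
  have key : ∀ f, kernelProd K f x = kernelProd K f y := fun f =>
    hsame _ ⟨_, Algebra.subset_adjoin ⟨f, rfl⟩, rfl⟩
  have h₁ := key ((⟨(dist · y.1.1.1), by fun_prop⟩, 1), (1, 1))
  have h₂ := key ((1, ⟨(dist · y.1.2.1), by fun_prop⟩), (1, 1))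
  have h₃ := key ((1, 1), (⟨(dist · y.1.1.2), by fun_prop⟩, 1))
  have h₄ := key ((1, 1), (1, ⟨(dist · y.1.2.2), by fun_prop⟩))
  simp [kernelProd] at h₁ h₂ h₃ h₄
  exact hxy (Subtype.ext (Prod.ext (Prod.ext h₁ h₃) (Prod.ext h₂ h₄)))

theorem exists_sum_mul_near {K : Set ((E × F) × (E × F))} (hK : IsCompact K)
    {c : E × F → E × F → ℝ} (hc : Continuous fun x : (E × F) × (E × F) => c x.1 x.2)
    {ε : ℝ} (hε : 0 < ε) :
    ∃ (N : ℕ) (u v : Fin N → E → ℝ) (w z : Fin N → F → ℝ),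
      (∀ n, Continuous (u n)) ∧ (∀ n, Continuous (v n)) ∧
      (∀ n, Continuous (w n)) ∧ (∀ n, Continuous (z n)) ∧
      ∀ x ∈ K, |c x.1 x.2 - ∑ n, u n x.1.1 * v n x.2.1 * (w n x.1.2 * z n x.2.2)| ≤ ε := by
  have : CompactSpace K := isCompact_iff_compactSpace.mp hK
  obtain ⟨g, hg⟩ := ContinuousMap.exists_mem_subalgebra_near_continuousMap_of_separatesPoints _
    (separatesPoints_adjoin_kernelProd K) ⟨fun x => c x.1.1 x.1.2, by fun_prop⟩ ε hε
  have hspan :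
      (g : C(K, ℝ)) ∈ Submodule.span ℝ (MonoidHom.mrange (kernelProd K) : Set C(K, ℝ)) := by
    have hadjoin := Algebra.adjoin_eq_span ℝ (MonoidHom.mrange (kernelProd K) : Set C(K, ℝ))
    rw [Submonoid.closure_eq] at hadjoin
    exact hadjoin ▸ g.2
  obtain ⟨N, r, f, hsum⟩ := Submodule.mem_span_set'.mp hspan
  choose q hq using fun n => (f n).2
  refine ⟨N, fun n s => r n * (q n).1.1 s, fun n => (q n).1.2, fun n => (q n).2.1,
    fun n => (q n).2.2, fun n => by fun_prop, fun n => by fun_prop, fun n => by fun_prop,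
    fun n => by fun_prop, fun x hx => ?_⟩
  have hx := (ContinuousMap.norm_coe_le_norm _ ⟨x, hx⟩).trans hg.le
  rw [← hsum] at hx
  simpa [abs_sub_comm, ← hq, kernelProd, mul_assoc] using hx

end StoneWeierstrass

lemma finiteDimensional_range_rankOne {𝕜 E F : Type*} [RCLike 𝕜] [NormedAddCommGroup E]
    [InnerProductSpace 𝕜 E] [NormedAddCommGroup F] [InnerProductSpace 𝕜 F] (x : E) (y : F) :
    FiniteDimensional 𝕜 (LinearMap.range (rankOne 𝕜 x y : F →ₗ[𝕜] E)) := by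
  refine Submodule.finiteDimensional_of_le (S₂ := 𝕜 ∙ x) ?_
  rintro _ ⟨f, rfl⟩
  exact Submodule.smul_mem _ _ (Submodule.mem_span_singleton_self x)

lemma ae_mem_prod {α β : Type*} [MeasurableSpace α] [MeasurableSpace β] {μ : Measure α}
    {ν : Measure β} {s : Set α} {t : Set β} (hs : ∀ᵐ x ∂μ, x ∈ s) (ht : ∀ᵐ y ∂ν, y ∈ t) :
    ∀ᵐ z ∂μ.prod ν, z ∈ s ×ˢ t :=
  (Measure.quasiMeasurePreserving_fst.ae hs).and (Measure.quasiMeasurePreserving_snd.ae ht)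

lemma exists_pos_le_and_mul_le {ε r : ℝ} (hε : 0 < ε) (hr : 0 ≤ r) :
    ∃ ε' > 0, ε' ≤ ε ∧ ε' * r ≤ ε := by
  refine ⟨ε / (1 + r), by positivity, div_le_self hε.le (by linarith), ?_⟩
  rw [div_mul_eq_mul_div, div_le_iff₀ (by positivity)]
  nlinarith

lemma isFiniteMeasure_restVol {n : ℕ} {S : Set (EuclideanSpace ℝ (Fin n))} (hS : IsCompact S) :
    IsFiniteMeasure (restVol S) :=
  isFiniteMeasure_restrict.mpr hS.measure_lt_top.ne

lemma ae_mem_restVol {n : ℕ} {S : Set (EuclideanSpace ℝ (Fin n))} (hS : IsCompact S) :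
    ∀ᵐ x ∂restVol S, x ∈ S :=
  ae_restrict_mem hS.measurableSet

lemma memLp_restVol {n : ℕ} {S : Set (EuclideanSpace ℝ (Fin n))} (hS : IsCompact S)
    {f : EuclideanSpace ℝ (Fin n) → ℝ} (hf : Continuous f) : MemLp f 2 (restVol S) :=
  have := isFiniteMeasure_restVol hS
  memLp_of_continuous_of_ae_mem hS (ae_mem_restVol hS) hf 2

theorem stmt14_general {κ : Type*} {p q : ℕ}
    (S : Set (EuclideanSpace ℝ (Fin p))) (T : Set (EuclideanSpace ℝ (Fin q)))
    (hScpt : IsCompact S) (hTcpt : IsCompact T)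
    (P : HilbertTensorProduct (Lp ℝ 2 (restVol S)) (Lp ℝ 2 (restVol T))
      (Lp ℝ 2 ((restVol S).prod (restVol T))))
    (hP : ∀ (f : Lp ℝ 2 (restVol S)) (g : Lp ℝ 2 (restVol T)),
      (P.tmul f g : _ → ℝ) =ᵐ[(restVol S).prod (restVol T)] fun x => f x.1 * g x.2)
    (b : HilbertBasis κ ℝ (Lp ℝ 2 ((restVol S).prod (restVol T))))
    -- the symmetric continuous kernel `c` of the Hilbert–Schmidt operator `C`
    (c : (EuclideanSpace ℝ (Fin p) × EuclideanSpace ℝ (Fin q)) →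
      (EuclideanSpace ℝ (Fin p) × EuclideanSpace ℝ (Fin q)) → ℝ)
    (hccont : Continuous fun x : (EuclideanSpace ℝ (Fin p) × EuclideanSpace ℝ (Fin q)) ×
      (EuclideanSpace ℝ (Fin p) × EuclideanSpace ℝ (Fin q)) => c x.1 x.2)
    (C : Lp ℝ 2 ((restVol S).prod (restVol T)) →L[ℝ] Lp ℝ 2 ((restVol S).prod (restVol T)))
    (hC : ∀ f, (C f : _ → ℝ) =ᵐ[(restVol S).prod (restVol T)]
      fun x => ∫ y, c x y * f y ∂((restVol S).prod (restVol T)))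
    (ε : ℝ) (hε : 0 < ε) :
    ∃ (N : ℕ) (A : Fin N → (Lp ℝ 2 (restVol S) →L[ℝ] Lp ℝ 2 (restVol S)))
      (B : Fin N → (Lp ℝ 2 (restVol T) →L[ℝ] Lp ℝ 2 (restVol T)))
      (a : Fin N → EuclideanSpace ℝ (Fin p) → EuclideanSpace ℝ (Fin p) → ℝ)
      (bk : Fin N → EuclideanSpace ℝ (Fin q) → EuclideanSpace ℝ (Fin q) → ℝ),
      -- `Aₙ`, `Bₙ` are finite-rank integral operators with continuous kernels
      (∀ n, FiniteDimensional ℝ (LinearMap.range ((A n : Lp ℝ 2 (restVol S) →ₗ[ℝ]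
        Lp ℝ 2 (restVol S))))) ∧
      (∀ n, FiniteDimensional ℝ (LinearMap.range ((B n : Lp ℝ 2 (restVol T) →ₗ[ℝ]
        Lp ℝ 2 (restVol T))))) ∧
      (∀ n, Continuous fun x : EuclideanSpace ℝ (Fin p) × EuclideanSpace ℝ (Fin p) =>
        a n x.1 x.2) ∧
      (∀ n, Continuous fun x : EuclideanSpace ℝ (Fin q) × EuclideanSpace ℝ (Fin q) =>
        bk n x.1 x.2) ∧
      (∀ n, ∀ f, (A n f : _ → ℝ) =ᵐ[restVol S] fun s => ∫ s', a n s s' * f s' ∂(restVol S)) ∧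
      (∀ n, ∀ g, (B n g : _ → ℝ) =ᵐ[restVol T] fun t => ∫ t', bk n t t' * g t' ∂(restVol T)) ∧
      -- (a) Hilbert–Schmidt approximation
      hsNorm b (C - ∑ n, P.otimes (A n) (B n)) ≤ ε ∧
      -- (b) uniform approximation of the kernels
      (∀ s ∈ S, ∀ s' ∈ S, ∀ t ∈ T, ∀ t' ∈ T,
        |c (s, t) (s', t') - ∑ n, a n s s' * bk n t t'| ≤ ε) := by
  have := isFiniteMeasure_restVol hScpt
  have := isFiniteMeasure_restVol hTcpt
  have hST := hScpt.prod hTcpt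
  have hρ := ae_mem_prod (ae_mem_restVol hScpt) (ae_mem_restVol hTcpt)
  obtain ⟨ε', hε', hε'ε, hε'ρ⟩ := exists_pos_le_and_mul_le hε measureReal_nonneg
  obtain ⟨N, u, v, w, z, hu, hv, hw, hz, hcuvwz⟩ := exists_sum_mul_near (hST.prod hST) hccont hε'
  set A := fun n => rankOne ℝ ((memLp_restVol hScpt (hu n)).toLp (u n))
    ((memLp_restVol hScpt (hv n)).toLp (v n))
  set B := fun n => rankOne ℝ ((memLp_restVol hTcpt (hw n)).toLp (w n))
    ((memLp_restVol hTcpt (hz n)).toLp (z n))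
  have hC' : HasKernel (∑ n, P.otimes (A n) (B n))
      fun x y => ∑ n, u n x.1 * v n y.1 * (w n x.2 * z n y.2) :=
    .sum (fun n => hasKernel_otimes_rankOne hP (MemLp.coeFn_toLp _) (MemLp.coeFn_toLp _)
      (MemLp.coeFn_toLp _) (MemLp.coeFn_toLp _))
      fun n => .of_forall fun x => memLp_of_continuous_of_ae_mem hST hρ (by fun_prop) 2
  refine ⟨N, A, B, fun n s s' => u n s * v n s', fun n t t' => w n t * z n t',
    fun n => finiteDimensional_range_rankOne _ _, fun n => finiteDimensional_range_rankOne _ _,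
    fun n => by fun_prop, fun n => by fun_prop,
    fun n => hasKernel_rankOne (MemLp.coeFn_toLp _) (MemLp.coeFn_toLp _),
    fun n => hasKernel_rankOne (MemLp.coeFn_toLp _) (MemLp.coeFn_toLp _), ?_,
    fun s hs s' hs' t ht t' ht' => (hcuvwz ((s, t), (s', t')) ⟨⟨hs, ht⟩, hs', ht'⟩).trans hε'ε⟩
  exact (hsNorm_sub_le_of_continuous_kernels hST hρ b hC hC' hccont (by fun_prop) hε'.le
    fun x hx y hy => hcuvwz (x, y) ⟨hx, hy⟩).trans hε'ρ

/-- a Hilbert–Schmidt integral operator `C` on `L²(S × T)` with symmetric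
continuous kernel can be approximated, both in Hilbert–Schmidt norm and uniformly on the
level of kernels, by finite sums `Σ Aₙ ⊗̃ Bₙ` of tensor products of finite-rank integral
operators with continuous kernels. -/
theorem stmt14 {ι₁ ι₂ κ : Type*} {p q : ℕ}
    (S : Set (EuclideanSpace ℝ (Fin p))) (T : Set (EuclideanSpace ℝ (Fin q)))
    (hScpt : IsCompact S) (hTcpt : IsCompact T)
    (P : HilbertTensorProduct (Lp ℝ 2 (restVol S)) (Lp ℝ 2 (restVol T))
      (Lp ℝ 2 ((restVol S).prod (restVol T))))
    (hP : ∀ (f : Lp ℝ 2 (restVol S)) (g : Lp ℝ 2 (restVol T)),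
      (P.tmul f g : _ → ℝ) =ᵐ[(restVol S).prod (restVol T)] fun x => f x.1 * g x.2)
    (b : HilbertBasis κ ℝ (Lp ℝ 2 ((restVol S).prod (restVol T))))
    -- the symmetric continuous kernel `c` of the Hilbert–Schmidt operator `C`
    (c : (EuclideanSpace ℝ (Fin p) × EuclideanSpace ℝ (Fin q)) →
      (EuclideanSpace ℝ (Fin p) × EuclideanSpace ℝ (Fin q)) → ℝ)
    (hcsym : ∀ x y, c x y = c y x)
    (hccont : Continuous fun x : (EuclideanSpace ℝ (Fin p) × EuclideanSpace ℝ (Fin q)) ×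
      (EuclideanSpace ℝ (Fin p) × EuclideanSpace ℝ (Fin q)) => c x.1 x.2)
    (C : Lp ℝ 2 ((restVol S).prod (restVol T)) →L[ℝ] Lp ℝ 2 ((restVol S).prod (restVol T)))
    (hC : ∀ f, (C f : _ → ℝ) =ᵐ[(restVol S).prod (restVol T)]
      fun x => ∫ y, c x y * f y ∂((restVol S).prod (restVol T)))
    (hCHS : IsHS b C)
    (ε : ℝ) (hε : 0 < ε) :
    ∃ (N : ℕ) (A : Fin N → (Lp ℝ 2 (restVol S) →L[ℝ] Lp ℝ 2 (restVol S)))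
      (B : Fin N → (Lp ℝ 2 (restVol T) →L[ℝ] Lp ℝ 2 (restVol T)))
      (a : Fin N → EuclideanSpace ℝ (Fin p) → EuclideanSpace ℝ (Fin p) → ℝ)
      (bk : Fin N → EuclideanSpace ℝ (Fin q) → EuclideanSpace ℝ (Fin q) → ℝ),
      -- `Aₙ`, `Bₙ` are finite-rank integral operators with continuous kernels
      (∀ n, FiniteDimensional ℝ (LinearMap.range ((A n : Lp ℝ 2 (restVol S) →ₗ[ℝ]
        Lp ℝ 2 (restVol S))))) ∧
      (∀ n, FiniteDimensional ℝ (LinearMap.range ((B n : Lp ℝ 2 (restVol T) →ₗ[ℝ]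
        Lp ℝ 2 (restVol T))))) ∧
      (∀ n, Continuous fun x : EuclideanSpace ℝ (Fin p) × EuclideanSpace ℝ (Fin p) =>
        a n x.1 x.2) ∧
      (∀ n, Continuous fun x : EuclideanSpace ℝ (Fin q) × EuclideanSpace ℝ (Fin q) =>
        bk n x.1 x.2) ∧
      (∀ n, ∀ f, (A n f : _ → ℝ) =ᵐ[restVol S] fun s => ∫ s', a n s s' * f s' ∂(restVol S)) ∧
      (∀ n, ∀ g, (B n g : _ → ℝ) =ᵐ[restVol T] fun t => ∫ t', bk n t t' * g t' ∂(restVol T)) ∧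
      -- (a) Hilbert–Schmidt approximation
      hsNorm b (C - ∑ n, P.otimes (A n) (B n)) ≤ ε ∧
      -- (b) uniform approximation of the kernels
      (∀ s ∈ S, ∀ s' ∈ S, ∀ t ∈ T, ∀ t' ∈ T,
        |c (s, t) (s', t') - ∑ n, a n s s' * bk n t t'| ≤ ε) :=
  stmt14_general S T hScpt hTcpt P hP b c hccont C hC ε hε
end
end
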